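/- Let X be a smooth quintic hypersurface in P^3 with hyperplane class C, and let D be a divisor on X with C.D = 2 such that both h^0(O_X(D)) <= 1 and h^0(O_X(1)(-D)) <= 1 hold. Then D^2 <= -4. -/
import Mathlib


/-- An abstract model of a smooth quintic hypersurface `X ⊂ ℙ³` over `ℂ`:
the group of divisors with intersection pairing, linear equivalence,
effectivity, the hyperplane section `C` (with `C² = 5`, `K_X = O_X(1)`),
cohomology `hⁱ(O_X(D))`, arithmetic genus, Riemann–Roch and Serre duality. -/
structure QuinticSurface where
  Div : Type
  [divGroup : AddCommGroup Div]
  /-- intersection number `D.E` -/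
  inter : Div → Div → ℤ
  /-- a smooth hyperplane section of `X` -/
  C : Div
  Effective : Div → Prop
  /-- linear equivalence of divisors -/
  LinEquiv : Div → Div → Prop
  /-- `D` is a smooth irreducible curve on `X` -/
  SmoothIrred : Div → Prop
  /-- `|D|` is base point free -/
  BasePointFree : Div → Prop
  /-- `hⁱ(O_X(D))` -/
  h0 : Div → ℕ
  h1 : Div → ℕ
  h2 : Div → ℕ
  /-- arithmetic genus `P_a(D)` -/
  pa : Div → ℤ
  inter_comm : ∀ D E, inter D E = inter E D
  inter_add_left : ∀ D E F, inter (D + E) F = inter D F + inter E F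
  linEquiv_refl : ∀ D, LinEquiv D D
  linEquiv_symm : ∀ {D E}, LinEquiv D E → LinEquiv E D
  linEquiv_trans : ∀ {D E F}, LinEquiv D E → LinEquiv E F → LinEquiv D F
  inter_linEquiv : ∀ {D D'} (E : Div), LinEquiv D D' → inter D E = inter D' E
  h0_linEquiv : ∀ {D E}, LinEquiv D E → h0 D = h0 E
  effective_add : ∀ {D E}, Effective D → Effective E → Effective (D + E)
  effective_zero : Effective 0
  /-- `|D| ≠ ∅` iff `h⁰(O_X(D)) > 0` -/
  effective_iff : ∀ D, 0 < h0 D ↔ ∃ E, Effective E ∧ LinEquiv E D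
  /-- `C` is a plane quintic -/
  inter_C_C : inter C C = 5
  /-- Riemann–Roch on `X` (with `K_X = C`): `2χ(O_X(D)) = D.(D-C) + 10` -/
  riemannRoch : ∀ D, 2 * ((h0 D : ℤ) - (h1 D : ℤ) + (h2 D : ℤ)) = inter D (D - C) + 10
  /-- Serre duality: `h²(O_X(D)) = h⁰(O_X(C-D))` -/
  serre2 : ∀ D, h2 D = h0 (C - D)
  /-- Serre duality: `h¹(O_X(D)) = h¹(O_X(C-D))` -/
  serre1 : ∀ D, h1 D = h1 (C - D)
  /-- `2 P_a(D) - 2 = D.(D+C)` -/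
  two_pa : ∀ D, 2 * pa D = inter D (D + C) + 2

attribute [instance] QuinticSurface.divGroup

namespace QuinticSurface

variable (S : QuinticSurface)

/-- A line on `X`: an effective divisor of degree 1 and arithmetic genus 0. -/
def IsLine (Γ : S.Div) : Prop :=
  S.Effective Γ ∧ S.inter S.C Γ = 1 ∧ S.pa Γ = 0

/-- `E ∈ |D|`: `E` is an effective divisor linearly equivalent to `D`. -/
def Mem (E D : S.Div) : Prop := S.Effective E ∧ S.LinEquiv E D

/-- `D` is an aCM curve on `X`, i.e. `O_X(D)` is an aCM line bundle:
`h¹(O_X(D)(l)) = 0` for all `l ∈ ℤ`. -/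
def IsACM (D : S.Div) : Prop := ∀ l : ℤ, S.h1 (D + l • S.C) = 0

/-- `F` is a (nonzero) fixed component of the linear system `|D|`. -/
def IsFixedComponent (F D : S.Div) : Prop :=
  F ≠ 0 ∧ S.Effective F ∧ ∀ E, S.Mem E D → S.Effective (E - F)

end QuinticSurface

/-- a divisor `D` on a smooth quintic with `C.D = 2`,
`h⁰(O_X(D)) ≤ 1` and `h⁰(O_X(1)(-D)) ≤ 1` satisfies `D² ≤ -4`. -/
theorem statement2 (S : QuinticSurface) (D : S.Div)
    (hdeg : S.inter S.C D = 2) (h0D : S.h0 D ≤ 1) (h0CD : S.h0 (S.C - D) ≤ 1) :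
    S.inter D D ≤ -4 := by
  have z : ∀ E : S.Div, S.inter 0 E = 0 := by
    intro E
    have := S.inter_add_left 0 0 E
    simp at this
    linarith
  have hneg : S.inter (-S.C) D = - S.inter S.C D := by
    have := S.inter_add_left (-S.C) S.C D
    simp at this
    linarith [z D]
  have key : S.inter D (D - S.C) = S.inter D D - 2 := by
    rw [S.inter_comm, sub_eq_add_neg, S.inter_add_left, S.inter_comm D D, hneg, hdeg]; ring
  have rr := S.riemannRoch D
  rw [key, S.serre2 D] at rr
  have h1 : (0:ℤ) ≤ S.h1 D := Int.ofNat_nonneg _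
  have c1 : (S.h0 D : ℤ) ≤ 1 := by exact_mod_cast h0D
  have c2 : (S.h0 (S.C - D) : ℤ) ≤ 1 := by exact_mod_cast h0CD
  linarith
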